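/- Let X be a Noetherian scheme, let U be a dense open subset of X, and let x_0, x_1, …, x_d be an increasing sequence in X. Then there exists an increasing sequence x_0, x_1', …, x_d' in X such that x_i' ∈ U for all i ≥ 1. -/

import Mathlib

open AlgebraicGeometry CategoryTheory

/-- A sequence of points `x 0, …, x d` of a topological space is an *increasing
sequence* (of length `d`) if `x i ≠ x (i+1)` and `x i` lies in the closure of
`{x (i+1)}` for all `0 ≤ i < d`. -/
def IsIncreasingSeq {T : Type*} [TopologicalSpace T] {d : ℕ} (x : Fin (d + 1) → T) : Prop :=
  ∀ i : Fin d, x i.castSucc ≠ x i.succ ∧ x i.castSucc ∈ closure ({x i.succ} : Set T)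

/-- `U ∈ D_d(T)`: `U` is an open subset such that every point `z` outside of `U`
admits an increasing sequence `z = x 0, x 1, …, x d` of length `d`
(the standard density structure). -/
def InStdDensity (T : Type*) [TopologicalSpace T] (d : ℕ) (U : Set T) : Prop :=
  IsOpen U ∧ ∀ z ∉ U, ∃ x : Fin (d + 1) → T, x 0 = z ∧ IsIncreasingSeq x

/-!
Going down the chain, each point but `x 0` is replaced by a point of `U`. The topmost one is
replaced by the generic point of an irreducible component through it; this point lies in `U`
because a Noetherian space has finitely many components, so each one meets the dense open `U`.
Once `x' (i+1) ∈ U` strictly generalizes `x i`, which strictly generalizes `x (i-1)`, we need a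
point of `U` strictly between `x' (i+1)` and `x (i-1)`. On an affine chart this says: for primes
`p₀ < p₁ < p₂` of a Noetherian ring and `a ∉ p₀` there is a prime `p₀ < q < p₂` with `a ∉ q`.
Choose `x ∈ p₂` outside the minimal primes of `p₀ + (a)` (prime avoidance) and take for `q` a
minimal prime of `p₀ + (x)` below `p₂`. By Krull's principal ideal theorem in `A ⧸ p₀`, no prime
lies strictly between `p₀` and such a minimal prime.
-/

namespace Ideal

variable {A : Type*} [CommRing A] [IsNoetherianRing A]

theorem eq_of_le_of_lt_of_mem_minimalPrimes_sup_span_singleton {P r q : Ideal A} [P.IsPrime]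
    [r.IsPrime] {x : A} (hq : q ∈ (P ⊔ span {x}).minimalPrimes) (hPr : P ≤ r) (hrq : r < q) :
    r = P := by
  have := hq.isPrime
  by_contra hne
  let f := Quotient.mk P
  have hmap_lt {I J : Ideal A} (hI : P ≤ I) (hJ : P ≤ J) (h : I < J) : I.map f < J.map f := by
    refine (map_mono h.le).lt_of_ne fun he => h.ne ?_
    rw [← comap_map_mk hI, ← comap_map_mk hJ, he]
  have := map_isPrime_of_surjective (f := f) Quotient.mk_surjective (I := r) (by rwa [mk_ker])
  have := map_isPrime_of_surjective (f := f) Quotient.mk_surjective (I := q)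
    (by rw [mk_ker]; exact hPr.trans hrq.le)
  have hr : 1 ≤ (r.map f).height := by
    rw [Order.one_le_iff_ne_zero, Ne, height_eq_zero_iff_eq_bot, ← map_quotient_self P]
    exact (hmap_lt le_rfl hPr (hPr.lt_of_ne' hne)).ne'
  have hq2 : 2 ≤ (q.map f).height := calc
    2 = 1 + 1 := rfl
    _ ≤ (r.map f).height + 1 := by gcongr
    _ ≤ (q.map f).height :=
      height_add_one_le_of_lt_of_isPrime (hmap_lt hPr (hPr.trans hrq.le) hrq)
  exact absurd (hq2.trans (map_height_le_one_of_mem_minimalPrimes hq)) (by norm_num)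

theorem exists_isPrime_lt_lt_notMem {p₀ p₁ p₂ : Ideal A} [p₀.IsPrime] [p₁.IsPrime] [p₂.IsPrime]
    (h₀₁ : p₀ < p₁) (h₁₂ : p₁ < p₂) {a : A} (ha : a ∉ p₀) :
    ∃ q : Ideal A, q.IsPrime ∧ p₀ < q ∧ q < p₂ ∧ a ∉ q := by
  by_cases ha₁ : a ∈ p₁
  case neg => exact ⟨p₁, inferInstance, h₀₁, h₁₂, ha₁⟩
  have span_le {I : Ideal A} {y : A} (hI : p₀ ≤ I) (hy : y ∈ I) : p₀ ⊔ span {y} ≤ I :=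
    sup_le hI ((span_singleton_le_iff_mem _).mpr hy)
  have ne_of_mem_minimalPrimes {q : Ideal A} {y : A} (hq : q ∈ (p₀ ⊔ span {y}).minimalPrimes) :
      q ≠ p₂ := by
    rintro rfl
    exact h₀₁.ne' (eq_of_le_of_lt_of_mem_minimalPrimes_sup_span_singleton hq h₀₁.le h₁₂)
  have hp₀₂ : p₀ ≤ p₂ := h₀₁.le.trans h₁₂.le
  have hap₂ : p₀ ⊔ span {a} ≤ p₂ := span_le hp₀₂ (h₁₂.le ha₁)
  set M := (p₀ ⊔ span {a}).minimalPrimes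
  -- `p₂ ∉ M`, since `p₁` lies strictly between `p₀` and `p₂`
  obtain ⟨x, hx₂, hxM⟩ : ∃ x ∈ p₂, ∀ P ∈ M, x ∉ P := by
    by_contra! h
    obtain ⟨P, hPM, hP⟩ := (subset_union_prime_finite (f := id)
      (finite_minimalPrimes_of_isNoetherianRing A _) p₂ p₂ fun P hP _ _ => hP.isPrime).mp
      fun y hy => let ⟨P, hPM, hyP⟩ := h y hy; Set.mem_biUnion hPM hyP
    have := hPM.isPrime
    refine ne_of_mem_minimalPrimes hPM (le_antisymm ?_ hP)
    exact hPM.2 ⟨inferInstance, hap₂⟩ hP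
  obtain ⟨P₀, hP₀M, -⟩ := exists_minimalPrimes_le hap₂
  obtain ⟨q, hq, hq₂⟩ := exists_minimalPrimes_le (span_le hp₀₂ hx₂)
  have := hq.isPrime
  have hp₀q : p₀ ≤ q := le_sup_left.trans hq.1.2
  have hxq : x ∈ q := hq.1.2 (mem_sup_right (mem_span_singleton_self x))
  refine ⟨q, inferInstance, hp₀q.lt_of_ne ?_, hq₂.lt_of_ne (ne_of_mem_minimalPrimes hq), ?_⟩
  · rintro rfl
    exact hxM P₀ hP₀M (le_sup_left.trans hP₀M.1.2 hxq)
  · intro haq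
    obtain ⟨P, hPM, hPq⟩ := exists_minimalPrimes_le (span_le hp₀q haq)
    have := hPM.isPrime
    have hP : P = p₀ := eq_of_le_of_lt_of_mem_minimalPrimes_sup_span_singleton hq
      (le_sup_left.trans hPM.1.2) (hPq.lt_of_ne fun h => hxM P hPM (h ▸ hxq))
    exact ha (hP ▸ hPM.1.2 (mem_sup_right (mem_span_singleton_self a)))

end Ideal

theorem PrimeSpectrum.exists_mem_lt_lt_of_isOpen {A : Type*} [CommRing A] [IsNoetherianRing A]
    {z w x : PrimeSpectrum A} (hzw : z < w) (hwx : w < x) {V : Set (PrimeSpectrum A)}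
    (hV : IsOpen V) (hzV : z ∈ V) : ∃ y ∈ V, z < y ∧ y < x := by
  obtain ⟨_, ⟨a, rfl⟩, hza, haV⟩ :=
    isTopologicalBasis_basic_opens.exists_subset_of_mem_open hzV hV
  rw [← asIdeal_lt_asIdeal] at hzw hwx
  obtain ⟨q, hq, hzq, hqx, haq⟩ := Ideal.exists_isPrime_lt_lt_notMem hzw hwx hza
  exact ⟨⟨q, hq⟩, haV haq, hzq, hqx⟩

theorem AlgebraicGeometry.Scheme.exists_mem_specializes_specializes_of_isOpen (X : Scheme)
    [IsLocallyNoetherian X] {z w x : X} (hzw : z ⤳ w) (hwx : w ⤳ x) (hzw' : z ≠ w)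
    (hwx' : w ≠ x) {V : Set X} (hV : IsOpen V) (hzV : z ∈ V) :
    ∃ y ∈ V, z ⤳ y ∧ y ⤳ x ∧ z ≠ y ∧ y ≠ x := by
  obtain ⟨W, hW, hxW, -⟩ := exists_isAffineOpen_mem_and_subset (U := ⊤) (x := x) trivial
  have := IsLocallyNoetherian.component_noetherian ⟨W, hW⟩
  have hf := hW.fromSpec.isOpenEmbedding
  have hW' := hf.isOpen_range
  obtain ⟨x, rfl⟩ : x ∈ Set.range hW.fromSpec := by rwa [hW.range_fromSpec]
  obtain ⟨w, rfl⟩ := hwx.mem_open hW' ⟨x, rfl⟩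
  obtain ⟨z, rfl⟩ := (hzw.trans hwx).mem_open hW' ⟨x, rfl⟩
  simp only [hf.toIsInducing.specializes_iff, hf.injective.ne_iff] at hzw hwx hzw' hwx'
  obtain ⟨y, hyV, hzy, hyx⟩ := PrimeSpectrum.exists_mem_lt_lt_of_isOpen
    (lt_of_le_of_ne ((PrimeSpectrum.le_iff_specializes _ _).mpr hzw) hzw')
    (lt_of_le_of_ne ((PrimeSpectrum.le_iff_specializes _ _).mpr hwx) hwx')
    (hV.preimage hW.fromSpec.continuous) hzV
  have map_lt {p q : PrimeSpectrum Γ(X, W)} (h : p < q) :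
      hW.fromSpec p ⤳ hW.fromSpec q ∧ hW.fromSpec p ≠ hW.fromSpec q :=
    ⟨((PrimeSpectrum.le_iff_specializes _ _).mp h.le).map hf.continuous, hf.injective.ne h.ne⟩
  exact ⟨hW.fromSpec y, hyV, (map_lt hzy).1, (map_lt hyx).1, (map_lt hzy).2, (map_lt hyx).2⟩

theorem Dense.exists_mem_specializes {Y : Type*} [TopologicalSpace Y]
    [TopologicalSpace.NoetherianSpace Y] [QuasiSober Y] {U : Set Y} (hd : Dense U) (hU : IsOpen U)
    (p : Y) : ∃ η ∈ U, η ⤳ p := by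
  obtain ⟨o, ho, hone, hoC⟩ :=
    TopologicalSpace.NoetherianSpace.exists_isOpen_nonempty_subset_irreducibleComponent _
      (irreducibleComponent_mem_irreducibleComponents p)
  obtain ⟨η, hη⟩ := QuasiSober.sober isIrreducible_irreducibleComponent
    (isClosed_irreducibleComponent (x := p))
  obtain ⟨u, huo, huU⟩ := hd.inter_open_nonempty o ho hone
  exact ⟨η, (hη.mem_open_set_iff hU).mpr ⟨u, hoC huo, huU⟩,
    hη.specializes mem_irreducibleComponent⟩

theorem isIncreasingSeq_cons {T : Type*} [TopologicalSpace T] {d : ℕ} {a : T}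
    {t : Fin (d + 1) → T} :
    IsIncreasingSeq (Fin.cons a t : Fin (d + 2) → T) ↔
      (a ≠ t 0 ∧ t 0 ⤳ a) ∧ IsIncreasingSeq t := by
  simp [IsIncreasingSeq, Fin.forall_fin_succ, specializes_iff_mem_closure]

theorem AlgebraicGeometry.Scheme.exists_isIncreasingSeq_cons_forall_mem (X : Scheme)
    [IsNoetherian X] {U : Set X} (hU : IsOpen U) (hd : Dense U) :
    ∀ (d : ℕ) (a : X) (t : Fin (d + 1) → X), IsIncreasingSeq (Fin.cons a t : Fin (d + 2) → X) →
      ∃ t' : Fin (d + 1) → X, IsIncreasingSeq (Fin.cons a t' : Fin (d + 2) → X) ∧ ∀ i, t' i ∈ U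
  | 0, a, t, h => by
    obtain ⟨⟨hat, hta⟩, -⟩ := isIncreasingSeq_cons.mp h
    obtain ⟨η, hηU, hηt⟩ := hd.exists_mem_specializes hU (t 0)
    refine ⟨fun _ => η, isIncreasingSeq_cons.mpr ⟨⟨?_, hηt.trans hta⟩, Fin.elim0⟩, fun _ => hηU⟩
    rintro rfl
    exact hat (hηt.antisymm hta).eq
  | d + 1, a, t, h => by
    rw [← Fin.cons_self_tail t, isIncreasingSeq_cons] at h
    obtain ⟨⟨hat, hta⟩, ht⟩ := h
    obtain ⟨s, hs, hsU⟩ := X.exists_isIncreasingSeq_cons_forall_mem hU hd d _ _ ht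
    obtain ⟨⟨hts, hst⟩, hs⟩ := isIncreasingSeq_cons.mp hs
    obtain ⟨y, hyU, hsy, hya, hsy', hya'⟩ :=
      X.exists_mem_specializes_specializes_of_isOpen hst hta hts.symm hat.symm hU (hsU 0)
    refine ⟨Fin.cons y s, ?_, Fin.cases hyU hsU⟩
    exact isIncreasingSeq_cons.mpr
      ⟨⟨hya'.symm, hya⟩, isIncreasingSeq_cons.mpr ⟨⟨hsy'.symm, hsy⟩, hs⟩⟩

theorem stmt_3 (X : Scheme) [AlgebraicGeometry.IsNoetherian X]
    (U : Set X) (hUopen : IsOpen U) (hUdense : Dense U)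
    (d : ℕ) (x : Fin (d + 1) → X) (hx : IsIncreasingSeq x) :
    ∃ x' : Fin (d + 1) → X, IsIncreasingSeq x' ∧ x' 0 = x 0 ∧
      ∀ i : Fin (d + 1), i ≠ 0 → x' i ∈ U := by
  cases d with
  | zero => exact ⟨x, hx, rfl, fun i hi => absurd (Fin.fin_one_eq_zero i) hi⟩
  | succ d =>
    rw [← Fin.cons_self_tail x] at hx
    obtain ⟨t, ht, htU⟩ := X.exists_isIncreasingSeq_cons_forall_mem hUopen hUdense d _ _ hx
    refine ⟨Fin.cons (x 0) t, ht, rfl, fun i hi => ?_⟩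
    obtain ⟨j, rfl⟩ := Fin.exists_succ_eq.mpr hi
    exact htU j
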